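/- arXiv:1701.00092 — 2 statements merged into one kernel-verified Lean document; each statement's English description precedes it below -/
import Mathlib

section
/- For A > 0, ∫_0^1 |exp(-At) - exp(-A(1-t))|·t dt = ((1-exp(-A))/A)·tanh(A/4). -/
open intervalIntegral

theorem integral_abs_weighted (A : ℝ) (hA : 0 < A) :
    ∫ t in (0:ℝ)..1, |Real.exp (-(A * t)) - Real.exp (-(A * (1 - t)))| * t =
      ((1 - Real.exp (-A)) / A) * Real.tanh (A / 4) := by
  have hA0 : A ≠ 0 := ne_of_gt hA
  set f : ℝ → ℝ := fun t => |Real.exp (-(A * t)) - Real.exp (-(A * (1 - t)))| * t with hf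
  have hcont : Continuous f := by fun_prop
  set F : ℝ → ℝ := fun t =>
      -(t/A + 1/A^2) * Real.exp (-(A*t)) - (t/A - 1/A^2) * Real.exp (-(A*(1-t))) with hFdef
  have hderiv : ∀ t : ℝ,
      HasDerivAt F ((Real.exp (-(A*t)) - Real.exp (-(A*(1-t)))) * t) t := by
    intro t
    have h1 : HasDerivAt (fun t : ℝ => Real.exp (-(A*t))) (-A * Real.exp (-(A*t))) t := by
      have h : HasDerivAt (fun t : ℝ => -(A*t)) (-A) t := by
        exact ((hasDerivAt_id t).const_mul A).neg.congr_deriv (by ring)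
      refine ((Real.hasDerivAt_exp (-(A*t))).comp t h).congr_deriv ?_; ring
    have h2 : HasDerivAt (fun t : ℝ => Real.exp (-(A*(1-t)))) (A * Real.exp (-(A*(1-t)))) t := by
      have h : HasDerivAt (fun t : ℝ => -(A*(1-t))) A t := by
        have := (((hasDerivAt_const t (1:ℝ)).sub (hasDerivAt_id t)).const_mul A).neg
        exact this.congr_deriv (by ring)
      refine ((Real.hasDerivAt_exp (-(A*(1-t)))).comp t h).congr_deriv ?_; ring
    have h3 : HasDerivAt (fun t : ℝ => -(t/A + 1/A^2)) (-(1/A)) t := by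
      have := (((hasDerivAt_id t).div_const A).add (hasDerivAt_const t (1/A^2))).neg
      exact this.congr_deriv (by ring)
    have h4 : HasDerivAt (fun t : ℝ => t/A - 1/A^2) (1/A) t := by
      exact ((hasDerivAt_id t).div_const A).sub_const (1/A^2)
    have hD := (h3.mul h1).sub (h4.mul h2)
    refine hD.congr_deriv ?_
    field_simp
    ring
  have hi : ∀ a b : ℝ, IntervalIntegrable f MeasureTheory.volume a b :=
    fun a b => hcont.intervalIntegrable a b
  have split : ∫ t in (0:ℝ)..1, f t = (∫ t in (0:ℝ)..(1/2), f t) + ∫ t in (1/2:ℝ)..1, f t :=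
    (integral_add_adjacent_intervals (hi 0 (1/2)) (hi (1/2) 1)).symm
  have e1 : ∫ t in (0:ℝ)..(1/2), f t = F (1/2) - F 0 := by
    have hcongr : ∫ t in (0:ℝ)..(1/2), f t
        = ∫ t in (0:ℝ)..(1/2), (Real.exp (-(A*t)) - Real.exp (-(A*(1-t)))) * t := by
      apply intervalIntegral.integral_congr
      intro t ht
      rw [Set.uIcc_of_le (by norm_num : (0:ℝ) ≤ 1/2)] at ht
      have hle : Real.exp (-(A*(1-t))) ≤ Real.exp (-(A*t)) := by
        apply Real.exp_le_exp.2
        nlinarith [ht.1, ht.2]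
      simp [f, abs_of_nonneg (sub_nonneg.2 hle)]
    rw [hcongr]
    exact intervalIntegral.integral_eq_sub_of_hasDerivAt (fun t _ => hderiv t)
      (by apply Continuous.intervalIntegrable; fun_prop)
  have e2 : ∫ t in (1/2:ℝ)..1, f t = F (1/2) - F 1 := by
    have hcongr : ∫ t in (1/2:ℝ)..1, f t
        = ∫ t in (1/2:ℝ)..1, -((Real.exp (-(A*t)) - Real.exp (-(A*(1-t)))) * t) := by
      apply intervalIntegral.integral_congr
      intro t ht
      rw [Set.uIcc_of_le (by norm_num : (1/2:ℝ) ≤ 1)] at ht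
      have hle : Real.exp (-(A*t)) ≤ Real.exp (-(A*(1-t))) := by
        apply Real.exp_le_exp.2
        nlinarith [ht.1, ht.2]
      have h := abs_of_nonpos (sub_nonpos.2 hle)
      simp only [f]
      rw [h]; ring
    rw [hcongr, intervalIntegral.integral_neg,
      intervalIntegral.integral_eq_sub_of_hasDerivAt (fun t _ => hderiv t)
      (by apply Continuous.intervalIntegrable; fun_prop)]
    ring
  rw [split, e1, e2]
  -- Now evaluate F at 0, 1/2, 1 and finish.
  have hb : Real.exp (-(A/2)) * Real.exp (-(A/2)) = Real.exp (-A) := by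
    rw [← Real.exp_add]; ring_nf
  have hq : Real.exp (-(A/4)) * Real.exp (-(A/4)) = Real.exp (-(A/2)) := by
    rw [← Real.exp_add]; ring_nf
  have hbpos : 0 < Real.exp (-(A/2)) := Real.exp_pos _
  have htanh : Real.tanh (A/4) = (1 - Real.exp (-(A/2))) / (1 + Real.exp (-(A/2))) := by
    rw [Real.tanh_eq_sinh_div_cosh, Real.sinh_eq, Real.cosh_eq]
    have hkey : Real.exp (A/4) * Real.exp (-(A/2)) = Real.exp (-(A/4)) := by
      rw [← Real.exp_add]; ring_nf
    rw [div_div_div_eq, div_eq_div_iff (by positivity) (by positivity)]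
    ring_nf at hkey ⊢
    linear_combination 4 * hkey
  have hF0 : F 0 = -(1/A^2) + Real.exp (-A) / A^2 := by
    simp only [hFdef]
    rw [show -(A*(0:ℝ)) = 0 by ring, show -(A*(1-(0:ℝ))) = -A by ring, Real.exp_zero]
    ring
  have hFh : F (1/2) = -(1/A) * Real.exp (-(A/2)) := by
    simp only [hFdef]
    rw [show -(A*(1/2:ℝ)) = -(A/2) by ring, show -(A*(1-(1/2:ℝ))) = -(A/2) by ring]
    ring
  have hF1 : F 1 = -(1/A + 1/A^2) * Real.exp (-A) - (1/A - 1/A^2) := by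
    simp only [hFdef]
    rw [show -(A*(1:ℝ)) = -A by ring, show -(A*(1-(1:ℝ))) = 0 by ring, Real.exp_zero]
    ring
  rw [hFh, hF0, hF1, htanh]
  have hc : Real.exp (-A) = Real.exp (-(A/2))^2 := by rw [← hb]; ring
  rw [hc]
  have h1b : (0:ℝ) < 1 + Real.exp (-(A/2)) := by positivity
  field_simp
  ring
end

section
/- Let u, v : [a,b] → ℝ be nonnegative convex functions. Then for all t ∈ [0,1], u(ta+(1-t)b)v(ta+(1-t)b) + u((1-t)a+tb)v((1-t)a+tb) ≤ (2t² - 2t + 1)[u(a)v(a) + u(b)v(b)] + 2t(1-t)[u(a)v(b) + u(b)v(a)]. -/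
theorem ConvexOn.apply_mul_apply_le_of_nonneg {𝕜 E : Type*} [Field 𝕜] [LinearOrder 𝕜]
    [IsStrictOrderedRing 𝕜] [AddCommMonoid E] [Module 𝕜 E] {s : Set E} {f g : E → 𝕜}
    (hf : ConvexOn 𝕜 s f) (hg : ConvexOn 𝕜 s g)
    (hf₀ : ∀ x ∈ s, 0 ≤ f x) (hg₀ : ∀ x ∈ s, 0 ≤ g x)
    {x y : E} (hx : x ∈ s) (hy : y ∈ s) {a b : 𝕜} (ha : 0 ≤ a) (hb : 0 ≤ b) (hab : a + b = 1) :
    f (a • x + b • y) * g (a • x + b • y) ≤ (a * f x + b * f y) * (a * g x + b * g y) :=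
  mul_le_mul (hf.2 hx hy ha hb hab) (hg.2 hx hy ha hb hab) (hg₀ _ (hf.1 hx hy ha hb hab))
    (add_nonneg (mul_nonneg ha (hf₀ x hx)) (mul_nonneg hb (hf₀ y hy)))

theorem product_convex_bound
    (a b : ℝ) (hab : a < b) (u v : ℝ → ℝ)
    (hu : ConvexOn ℝ (Set.Icc a b) u) (hv : ConvexOn ℝ (Set.Icc a b) v)
    (hupos : ∀ x ∈ Set.Icc a b, 0 ≤ u x) (hvpos : ∀ x ∈ Set.Icc a b, 0 ≤ v x) :
    ∀ t ∈ Set.Icc (0:ℝ) 1,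
      u (t * a + (1 - t) * b) * v (t * a + (1 - t) * b) +
        u ((1 - t) * a + t * b) * v ((1 - t) * a + t * b) ≤
      (2 * t ^ 2 - 2 * t + 1) * (u a * v a + u b * v b) +
        2 * t * (1 - t) * (u a * v b + u b * v a) := by
  rintro t ⟨ht₀, ht₁⟩
  have ha : a ∈ Set.Icc a b := Set.left_mem_Icc.2 hab.le
  have hb : b ∈ Set.Icc a b := Set.right_mem_Icc.2 hab.le
  have ht₁' : 0 ≤ 1 - t := sub_nonneg.2 ht₁
  calc _ ≤ (t * u a + (1 - t) * u b) * (t * v a + (1 - t) * v b) +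
        ((1 - t) * u a + t * u b) * ((1 - t) * v a + t * v b) :=
      add_le_add (hu.apply_mul_apply_le_of_nonneg hv hupos hvpos ha hb ht₀ ht₁' (by ring))
        (hu.apply_mul_apply_le_of_nonneg hv hupos hvpos ha hb ht₁' ht₀ (by ring))
    _ = _ := by ring
end
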